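/- Let p(z) = z^n + a_{n-1}z^{n-1} + … + a_1 z + a_0 be a monic polynomial over ℂ of degree n ≥ 3 with p(z) not identically equal to z^n (i.e., some a_i ≠ 0, so μ(p) > 0). Then Γ(p) ≤ 1.4655 · n · μ(p), i.e., the relative overestimation Γ(p)/μ(p) of the maximum root modulus by the bound Γ(p) does not exceed 1.4655·n. -/

import Mathlib

open Finset

/-- The `k`-th term in the definition of `τ`: for `k = 3` it is `(|a (n-3)|/2.15)^(1/3)`,
for `k = 4` it is `(|a (n-4)|/2)^(1/4)`, and for `k ≥ 5` it is `|a (n-k)|^(1/k)`. -/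
noncomputable def tauTerm (n k : ℕ) (a : ℕ → ℂ) : ℝ :=
  if k = 3 then (‖a (n - 3)‖ / 2.15) ^ ((1 : ℝ) / 3)
  else if k = 4 then (‖a (n - 4)‖ / 2) ^ ((1 : ℝ) / 4)
  else (‖a (n - k)‖) ^ ((1 : ℝ) / k)

/-- `τ = max{(|a_{n-3}|/2.15)^(1/3), (|a_{n-4}|/2)^(1/4), |a_{n-5}|^(1/5), …, |a_0|^(1/n)}`. -/
noncomputable def tau (n : ℕ) (a : ℕ → ℂ) (hn : 3 ≤ n) : ℝ :=
  (Finset.Icc 3 n).sup' (Finset.nonempty_Icc.mpr hn) (fun k => tauTerm n k a)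

/-- The root bound `Γ(p)`. -/
noncomputable def Gamma (n : ℕ) (a : ℕ → ℂ) (hn : 3 ≤ n) : ℝ :=
  max (Real.sqrt 3.15 *
        Real.sqrt ((tau n a hn) ^ 2 + max (‖a (n - 2)‖) (2 * (tau n a hn) ^ 2)))
      ((‖a (n - 1)‖ +
        Real.sqrt ((‖a (n - 1)‖) ^ 2 +
          4 * ((tau n a hn) ^ 2 + max (‖a (n - 2)‖) (2.15 * (tau n a hn) ^ 2)))) / 2)

/-! By Vieta's formulas the roots, all of modulus at most `μ`, give
`|a_{n-k}| ≤ C(n, k) μ^k ≤ (n μ)^k / k!`. With the weights `w_3 = 2.15`, `w_4 = 2`, `w_k = 1`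
of `τ` one has `12.9^k ≤ (w_k k!)^3`, so every term of `τ` is at most `12.9^{-1/3} n μ` and
`τ² ≤ 0.1818064 (n μ)²`. Inserting this, `|a_{n-1}| ≤ n μ` and `|a_{n-2}| ≤ (n μ)²/2` into the
two branches of `Γ` bounds both by `1.4655 n μ`; the first one almost exactly, as
`3.15 · (0.1818064 + 1/2) ≈ 1.4655²`. -/

open Polynomial
open scoped Nat

theorem norm_coeff_le_choose_mul_pow {n : ℕ} (a : ℕ → ℂ) {μ : ℝ}
    (hμ : ∀ z : ℂ, z ^ n + ∑ i ∈ range n, a i * z ^ i = 0 → ‖z‖ ≤ μ) {k : ℕ} (hk : k < n) :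
    ‖a k‖ ≤ μ ^ (n - k) * n.choose k := by
  set P : ℂ[X] := X ^ n + ∑ i ∈ range n, C (a i) * X ^ i
  have hlow : (∑ i ∈ range n, C (a i) * X ^ i).degree < (n : WithBot ℕ) :=
    (degree_sum_le _ _).trans_lt <| (Finset.sup_lt_iff (WithBot.bot_lt_coe n)).2 fun i hi =>
      (degree_C_mul_X_pow_le _ _).trans_lt (WithBot.coe_lt_coe.2 (mem_range.1 hi))
  have hmonic : P.Monic := monic_X_pow_add hlow
  have hdeg : P.natDegree = n := by
    rw [natDegree_add_eq_left_of_degree_lt (by rwa [degree_X_pow]), natDegree_X_pow]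
  have hcoeff : P.coeff k = a k := by simp [P, coeff_X_pow, hk, hk.ne]
  have hroots : ∀ z ∈ (P.map (RingHom.id ℂ)).roots, ‖z‖ ≤ μ := fun z hz => by
    rw [map_id, mem_roots hmonic.ne_zero, IsRoot, eval_add, eval_finsetSum] at hz
    exact hμ z (by simpa using hz)
  simpa [hcoeff, hdeg] using coeff_le_of_roots_le k hmonic (IsAlgClosed.splits _) hroots

theorem norm_coeff_sub_le_pow_div_factorial {n : ℕ} (a : ℕ → ℂ) {μ : ℝ} (hμ0 : 0 ≤ μ)
    (hμ : ∀ z : ℂ, z ^ n + ∑ i ∈ range n, a i * z ^ i = 0 → ‖z‖ ≤ μ) {k : ℕ}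
    (hk₁ : 1 ≤ k) (hkn : k ≤ n) : ‖a (n - k)‖ ≤ (n * μ) ^ k / k ! := by
  have h := norm_coeff_le_choose_mul_pow a hμ (k := n - k) (by omega)
  rw [Nat.sub_sub_self hkn, Nat.choose_symm hkn] at h
  calc ‖a (n - k)‖ ≤ μ ^ k * n.choose k := h
    _ ≤ μ ^ k * (n ^ k / k !) := by gcongr; exact_mod_cast Nat.choose_le_pow_div k n
    _ = (n * μ) ^ k / k ! := by ring

def tauWeight (k : ℕ) : ℝ := if k = 3 then 2.15 else if k = 4 then 2 else 1

theorem tauTerm_eq (n k : ℕ) (a : ℕ → ℂ) :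
    tauTerm n k a = (‖a (n - k)‖ / tauWeight k) ^ ((1 : ℝ) / k) := by
  unfold tauTerm tauWeight
  split_ifs <;> simp_all

theorem tauWeight_pos (k : ℕ) : 0 < tauWeight k := by
  unfold tauWeight; split_ifs <;> norm_num

theorem pow_le_factorial_cube {k : ℕ} (hk : 5 ≤ k) : (12.9 : ℝ) ^ k ≤ (k ! : ℝ) ^ 3 := by
  induction k, hk using Nat.le_induction with
  | base => norm_num [Nat.factorial]
  | succ k hk ih =>
    have hk6 : (6 : ℝ) ≤ k + 1 := by exact_mod_cast Nat.succ_le_succ hk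
    calc (12.9 : ℝ) ^ (k + 1) = 12.9 ^ k * 12.9 := pow_succ _ _
      _ ≤ (k ! : ℝ) ^ 3 * 6 ^ 3 := by gcongr; norm_num
      _ ≤ (k ! : ℝ) ^ 3 * (k + 1) ^ 3 := by gcongr
      _ = ((k + 1) ! : ℝ) ^ 3 := by push_cast [Nat.factorial_succ]; ring

theorem pow_le_tauWeight_mul_factorial_cube {k : ℕ} (hk : 3 ≤ k) :
    (12.9 : ℝ) ^ k ≤ (tauWeight k * k !) ^ 3 := by
  rcases (by omega : k = 3 ∨ k = 4 ∨ 5 ≤ k) with rfl | rfl | hk5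
  · norm_num [tauWeight, Nat.factorial]
  · norm_num [tauWeight, Nat.factorial]
  · rw [tauWeight, if_neg (by omega), if_neg (by omega), one_mul]
    exact pow_le_factorial_cube hk5

-- `12.9 = 2.15 · 3!`: the bound on the `k = 3` term of `τ` is sharp.
noncomputable def tauRatio : ℝ := (1 / 12.9 : ℝ) ^ ((1 : ℝ) / 3)

theorem tauRatio_nonneg : 0 ≤ tauRatio := Real.rpow_nonneg (by norm_num) _

theorem tauRatio_pow_three : tauRatio ^ 3 = 1 / 12.9 := by
  rw [tauRatio, ← Real.rpow_natCast, ← Real.rpow_mul (by norm_num)]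
  norm_num

theorem tauRatio_sq_le : tauRatio ^ 2 ≤ 0.1818064 := by
  refine (pow_le_pow_iff_left₀ (by positivity) (by norm_num) (by norm_num : 3 ≠ 0)).1 ?_
  rw [← pow_mul, show 2 * 3 = 3 * 2 from rfl, pow_mul, tauRatio_pow_three]
  norm_num

theorem inv_tauWeight_mul_factorial_le {k : ℕ} (hk : 3 ≤ k) :
    (tauWeight k * k !)⁻¹ ≤ tauRatio ^ k := by
  have hw : 0 < tauWeight k * k ! := mul_pos (tauWeight_pos k) (by positivity)
  refine (pow_le_pow_iff_left₀ (by positivity) (pow_nonneg tauRatio_nonneg k)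
    (by norm_num : 3 ≠ 0)).1 ?_
  rw [← pow_mul, mul_comm k 3, pow_mul, tauRatio_pow_three, inv_pow, div_pow, one_pow,
    one_div]
  exact inv_anti₀ (by positivity) (pow_le_tauWeight_mul_factorial_cube hk)

theorem tauTerm_le_tauRatio_mul {n k : ℕ} {a : ℕ → ℂ} {N : ℝ} (hN : 0 ≤ N) (hk : 3 ≤ k)
    (ha : ‖a (n - k)‖ ≤ N ^ k / k !) : tauTerm n k a ≤ tauRatio * N := by
  have hw := tauWeight_pos k
  rw [tauTerm_eq, one_div, Real.rpow_inv_le_iff_of_pos (by positivity)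
    (mul_nonneg tauRatio_nonneg hN) (by positivity), Real.rpow_natCast]
  calc ‖a (n - k)‖ / tauWeight k ≤ N ^ k / k ! / tauWeight k := by gcongr
    _ = N ^ k * (tauWeight k * k !)⁻¹ := by field_simp
    _ ≤ N ^ k * tauRatio ^ k := by gcongr; exact inv_tauWeight_mul_factorial_le hk
    _ = (tauRatio * N) ^ k := by ring

theorem tau_nonneg (n : ℕ) (a : ℕ → ℂ) (hn : 3 ≤ n) : 0 ≤ tau n a hn :=
  le_sup'_of_le _ (mem_Icc.2 ⟨le_rfl, hn⟩) (by
    rw [tauTerm_eq]; exact Real.rpow_nonneg (div_nonneg (norm_nonneg _) (tauWeight_pos 3).le) _)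

theorem tau_le_tauRatio_mul {n : ℕ} {a : ℕ → ℂ} (hn : 3 ≤ n) {N : ℝ} (hN : 0 ≤ N)
    (ha : ∀ k, 3 ≤ k → k ≤ n → ‖a (n - k)‖ ≤ N ^ k / k !) : tau n a hn ≤ tauRatio * N :=
  sup'_le _ _ fun k hk =>
    tauTerm_le_tauRatio_mul hN (mem_Icc.1 hk).1 (ha k (mem_Icc.1 hk).1 (mem_Icc.1 hk).2)

theorem Gamma_le_of_coeff_bounds {n : ℕ} {a : ℕ → ℂ} (hn : 3 ≤ n) {N : ℝ} (hN : 0 ≤ N)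
    (h₁ : ‖a (n - 1)‖ ≤ N) (h₂ : ‖a (n - 2)‖ ≤ N ^ 2 / 2)
    (hτ : tau n a hn ≤ tauRatio * N) : Gamma n a hn ≤ 1.4655 * N := by
  set t := tau n a hn
  have ht : t ^ 2 ≤ 0.1818064 * N ^ 2 :=
    calc t ^ 2 ≤ (tauRatio * N) ^ 2 := pow_le_pow_left₀ (tau_nonneg n a hn) hτ 2
      _ = tauRatio ^ 2 * N ^ 2 := mul_pow _ _ _
      _ ≤ 0.1818064 * N ^ 2 := by gcongr; exact tauRatio_sq_le
  have hmax : ∀ c ≤ (2.15 : ℝ), max ‖a (n - 2)‖ (c * t ^ 2) ≤ N ^ 2 / 2 := fun c hc =>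
    max_le h₂ (by nlinarith [sq_nonneg t, sq_nonneg N])
  have h₁sq : ‖a (n - 1)‖ ^ 2 ≤ N ^ 2 := pow_le_pow_left₀ (norm_nonneg _) h₁ 2
  apply max_le
  · rw [← Real.sqrt_mul (by norm_num), Real.sqrt_le_iff]
    exact ⟨by positivity, by nlinarith [hmax 2 (by norm_num)]⟩
  · -- `(1 + 1.931) / 2 = 1.4655` and `1.931 ^ 2 ≥ 1 + 4 · (0.1818064 + 1 / 2)`.
    have hsqrt : √(‖a (n - 1)‖ ^ 2 + 4 * (t ^ 2 + max ‖a (n - 2)‖ (2.15 * t ^ 2))) ≤ 1.931 * N :=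
      Real.sqrt_le_iff.2 ⟨by positivity, by nlinarith [hmax 2.15 le_rfl]⟩
    linarith

theorem Gamma_le_mul_maxRootModulus_general (n : ℕ) (hn : 3 ≤ n) (a : ℕ → ℂ) (μ : ℝ)
    (hμ : IsGreatest {x : ℝ | ∃ lam : ℂ,
      lam ^ n + ∑ i ∈ Finset.range n, a i * lam ^ i = 0 ∧ x = ‖lam‖} μ) :
    Gamma n a hn ≤ 1.4655 * n * μ := by
  obtain ⟨z, -, hz⟩ := hμ.1
  have hμ0 : 0 ≤ μ := hz ▸ norm_nonneg z
  have hroots : ∀ w : ℂ, w ^ n + ∑ i ∈ range n, a i * w ^ i = 0 → ‖w‖ ≤ μ :=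
    fun w hw => hμ.2 ⟨w, hw, rfl⟩
  have hcoeff : ∀ k, 1 ≤ k → k ≤ n → ‖a (n - k)‖ ≤ (n * μ) ^ k / k ! := fun k hk₁ hkn =>
    norm_coeff_sub_le_pow_div_factorial a hμ0 hroots hk₁ hkn
  have hN : 0 ≤ (n : ℝ) * μ := by positivity
  rw [mul_assoc]
  refine Gamma_le_of_coeff_bounds hn hN ?_ ?_
    (tau_le_tauRatio_mul hn hN fun k hk hkn => hcoeff k (by omega) hkn)
  · simpa using hcoeff 1 le_rfl (by omega)
  · simpa using hcoeff 2 (by norm_num) (by omega)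

/-- For a monic polynomial of degree `n ≥ 3`, not identically `z^n`, with maximum
root-modulus `μ`, the bound `Γ(p)` satisfies `Γ(p) ≤ 1.4655 · n · μ`. -/
theorem Gamma_le_mul_maxRootModulus (n : ℕ) (hn : 3 ≤ n) (a : ℕ → ℂ)
    (hne : ∃ i < n, a i ≠ 0) (μ : ℝ)
    (hμ : IsGreatest {x : ℝ | ∃ lam : ℂ,
      lam ^ n + ∑ i ∈ Finset.range n, a i * lam ^ i = 0 ∧ x = ‖lam‖} μ) :
    Gamma n a hn ≤ 1.4655 * n * μ :=
  Gamma_le_mul_maxRootModulus_general n hn a μ hμ
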